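/- Let G be a finite group admitting a generalised norm relation with respect to H ≤ G and 𝒥 = {J₁,…,J_ℓ} (i.e. for every simple ℚ[G]-module V with V^H ≠ 0 there exists J ∈ 𝒥 with V^J ≠ 0). Let p be a prime not dividing |G|. Then G' = C_p × G admits a generalised norm relation with respect to 1 × H and {1 × J₁, …, 1 × J_ℓ}. -/

import Mathlib

/-- A module over the group algebra `ℚ[Γ]` has nonzero `K`-fixed points. -/
def hasNonzeroFixedPoint (Γ : Type) [Group Γ] (K : Subgroup Γ)
    (V : Type) [AddCommGroup V] [Module (MonoidAlgebra ℚ Γ) V] : Prop :=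
  ∃ v : V, v ≠ 0 ∧ ∀ g ∈ K, MonoidAlgebra.of ℚ Γ g • v = v

/-- `Γ` admits a generalised norm relation with respect to `H` and the subgroups `J i`:
every simple `ℚ[Γ]`-module with nonzero `H`-fixed points has nonzero `J i`-fixed
points for some `i`. -/
def HasGNR (Γ : Type) [Group Γ] (H : Subgroup Γ) {ℓ : ℕ} (J : Fin ℓ → Subgroup Γ) : Prop :=
  ∀ (V : Type) (_ : AddCommGroup V) (_ : Module (MonoidAlgebra ℚ Γ) V),
    IsSimpleModule (MonoidAlgebra ℚ Γ) V →
    hasNonzeroFixedPoint Γ H V → ∃ i, hasNonzeroFixedPoint Γ (J i) V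

/-- if `G` admits a generalised norm relation with respect to `H` and
`J₁, …, J_ℓ`, and `p` is a prime not dividing `|G|`, then `C_p × G` admits a
generalised norm relation with respect to `1 × H` and `1 × J₁, …, 1 × J_ℓ`. -/
theorem statement14 (G : Type) [Group G] [Finite G] (H : Subgroup G)
    (ℓ : ℕ) (J : Fin ℓ → Subgroup G)
    (hGNR : HasGNR G H J)
    (p : ℕ) (hp : p.Prime) (hpG : ¬ p ∣ Nat.card G) :
    HasGNR (Multiplicative (ZMod p) × G)
      ((⊥ : Subgroup (Multiplicative (ZMod p))).prod H)
      (fun i => (⊥ : Subgroup (Multiplicative (ZMod p))).prod (J i)) := by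
  classical
  intro V _ _ _hsimple hfix
  obtain ⟨v₀, hv₀ne, hv₀fix⟩ := hfix
  letI : Fintype G := Fintype.ofFinite G
  haveI : NeZero ((Fintype.card G : ℚ)) :=
    ⟨by exact_mod_cast (Fintype.card_pos).ne'⟩
  -- the monoid hom `g ↦ (1, g)` and the induced ring hom of monoid algebras
  let f : G →* Multiplicative (ZMod p) × G := (1 : G →* Multiplicative (ZMod p)).prod (MonoidHom.id G)
  let φ : MonoidAlgebra ℚ G →+* MonoidAlgebra ℚ (Multiplicative (ZMod p) × G) :=
    MonoidAlgebra.mapDomainRingHom ℚ f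
  have hφof : ∀ g : G, φ (MonoidAlgebra.of ℚ G g) = MonoidAlgebra.of ℚ _ (f g) := by
    intro g
    show MonoidAlgebra.mapDomain f (MonoidAlgebra.single g (1:ℚ)) = MonoidAlgebra.single (f g) (1:ℚ)
    exact MonoidAlgebra.mapDomain_single
  -- restricted `ℚ[G]`-module structure on `V`
  letI modG : Module (MonoidAlgebra ℚ G) V := Module.compHom V φ
  have smul_def : ∀ (r : MonoidAlgebra ℚ G) (x : V), r • x = φ r • x := fun _ _ => rfl
  have hGsmul : ∀ g : G, ∀ x : V, MonoidAlgebra.of ℚ G g • x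
      = MonoidAlgebra.of ℚ (Multiplicative (ZMod p) × G) (1, g) • x := by
    intro g x
    rw [smul_def, hφof]
    rfl
  have hv₀Gfix : ∀ h ∈ H, MonoidAlgebra.of ℚ G h • v₀ = v₀ := by
    intro h hh
    rw [hGsmul]
    exact hv₀fix (1, h) (Subgroup.mem_prod.2 ⟨Subgroup.mem_bot.2 rfl, hh⟩)
  -- Zorn: a submodule `m` maximal among those not containing `v₀`
  obtain ⟨m, -, hmS, hmmax⟩ :
      ∃ m : Submodule (MonoidAlgebra ℚ G) V, (⊥ : Submodule (MonoidAlgebra ℚ G) V) ≤ m ∧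
        v₀ ∉ m ∧ ∀ z : Submodule (MonoidAlgebra ℚ G) V, v₀ ∉ z → m ≤ z → z ≤ m := by
    obtain ⟨m, hle, hmax⟩ := zorn_le_nonempty₀
      {P : Submodule (MonoidAlgebra ℚ G) V | v₀ ∉ P}
      (fun c hcS hc y hy => by
        refine ⟨sSup c, ?_, fun z hz => le_sSup hz⟩
        intro hmem
        obtain ⟨S, hSc, hvS⟩ := (Submodule.mem_sSup_of_directed ⟨y, hy⟩ hc.directedOn).1 hmem
        exact hcS hSc hvS)
      ⊥ (by simpa using hv₀ne)
    exact ⟨m, hle, hmax.1, fun z hz hmz => hmax.2 hz hmz⟩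
  -- complement and projection
  obtain ⟨Q, hQ⟩ := (haveI : NeZero (Nat.card G : ℚ) := ⟨by exact_mod_cast Nat.card_pos.ne'⟩
    MonoidAlgebra.Submodule.exists_isCompl (k := ℚ) (G := G) (V := V) m)
  let π : V →ₗ[MonoidAlgebra ℚ G] Q := Submodule.linearProjOfIsCompl Q m hQ.symm
  have hπv₀ : π v₀ ≠ 0 := by
    intro h
    exact hmS ((Submodule.linearProjOfIsCompl_apply_eq_zero_iff hQ.symm).1 h)
  set w₀ : V := (π v₀ : V) with hw₀
  have hw₀ne : w₀ ≠ 0 := fun h => hπv₀ (by exact_mod_cast Subtype.ext h)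
  have hw₀Q : w₀ ∈ Q := (π v₀).2
  -- key: `w₀` lies in every nonzero submodule of `Q`
  have key : ∀ Q' : Submodule (MonoidAlgebra ℚ G) V, Q' ≤ Q → Q' ≠ ⊥ → w₀ ∈ Q' := by
    intro Q' hQ'le hQ'ne
    have hv₀mem : v₀ ∈ m ⊔ Q' := by
      by_contra hnot
      have hle := hmmax (m ⊔ Q') hnot le_sup_left
      have : Q' ≤ m ⊓ Q := le_inf (le_sup_right.trans hle) hQ'le
      rw [hQ.inf_eq_bot] at this
      exact hQ'ne (le_bot_iff.1 this)
    obtain ⟨a, ha, b, hb, hab⟩ := Submodule.mem_sup.1 hv₀mem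
    have hπa : π a = 0 := Submodule.projectionOnto_apply_of_mem_right hQ.symm ha
    have hπb : π b = ⟨b, hQ'le hb⟩ :=
      Submodule.linearProjOfIsCompl_apply_left hQ.symm ⟨b, hQ'le hb⟩
    have : π v₀ = ⟨b, hQ'le hb⟩ := by
      rw [← hab, map_add, hπa, hπb, zero_add]
    rw [hw₀, this]
    exact hb
  -- the simple submodule spanned by `w₀`
  set W : Submodule (MonoidAlgebra ℚ G) V := Submodule.span (MonoidAlgebra ℚ G) {w₀} with hW
  have hWle : W ≤ Q := Submodule.span_le.2 (Set.singleton_subset_iff.2 hw₀Q)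
  have hWne : W ≠ ⊥ := by
    rw [hW, Ne, Submodule.span_singleton_eq_bot]
    exact hw₀ne
  have hWatom : IsAtom W := by
    refine ⟨hWne, fun b hb => ?_⟩
    by_contra hbne
    have : W ≤ b := Submodule.span_le.2 (Set.singleton_subset_iff.2
      (key b (hb.le.trans hWle) hbne))
    exact absurd this (not_le_of_gt hb)
  haveI hWsimple : IsSimpleModule (MonoidAlgebra ℚ G) W := isSimpleModule_iff_isAtom.2 hWatom
  -- `w₀` gives nonzero `H`-fixed points in `W`
  have hw₀W : w₀ ∈ W := Submodule.mem_span_singleton_self w₀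
  have hπ'fix : ∀ h ∈ H, MonoidAlgebra.of ℚ G h • w₀ = w₀ := by
    intro h hh
    have : MonoidAlgebra.of ℚ G h • π v₀ = π (MonoidAlgebra.of ℚ G h • v₀) := (map_smul π _ _).symm
    calc MonoidAlgebra.of ℚ G h • w₀ = ((MonoidAlgebra.of ℚ G h • π v₀ : Q) : V) := rfl
      _ = ((π (MonoidAlgebra.of ℚ G h • v₀) : Q) : V) := by rw [this]
      _ = w₀ := by rw [hv₀Gfix h hh]
  have hWfix : hasNonzeroFixedPoint G H W := by
    refine ⟨⟨w₀, hw₀W⟩, ?_, ?_⟩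
    · intro h
      exact hw₀ne (by simpa using congrArg Subtype.val h)
    · intro h hh
      ext
      exact hπ'fix h hh
  obtain ⟨i, u, hune, hufix⟩ := hGNR W inferInstance inferInstance hWsimple hWfix
  refine ⟨i, (u : V), ?_, ?_⟩
  · intro h
    exact hune (by simpa using Subtype.ext (p := (· ∈ W)) h)
  · rintro ⟨x, g⟩ hg
    obtain ⟨hx, hgJ⟩ := Subgroup.mem_prod.1 hg
    have hx1 : x = 1 := Subgroup.mem_bot.1 hx
    subst hx1
    have h1 : MonoidAlgebra.of ℚ (Multiplicative (ZMod p) × G) (1, g) • (u : V)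
        = MonoidAlgebra.of ℚ G g • (u : V) := (hGsmul g (u : V)).symm
    have h2 : MonoidAlgebra.of ℚ G g • (u : V) = ((MonoidAlgebra.of ℚ G g • u : W) : V) := rfl
    rw [h1, h2, hufix g hgJ]
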